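/- Let 𝔄, 𝔅 be invertible l×l matrices over a field 𝕂 with 𝔄𝔅 = 𝔅𝔄. Then the tuple (𝔄, 𝔄⁻¹(I+𝔅), (I+𝔄)𝔅⁻¹, 𝔅, 𝔅⁻¹(I+𝔄+𝔅)𝔄⁻¹) is a left matrix quiddity sequence of length 5 (i.e. the corresponding product of five 2l×2l block matrices equals −Id), and hence is the quiddity sequence of a two-sided matrix-valued frieze pattern of period 5. -/

import Mathlib

/-!
Multiplying out, `M(a₅)⋯M(a₁) = -Id` follows from the four relations
`a₂a₁ = 1 + a₄`, `a₃a₂ = 1 + a₅`, `a₃a₄ = 1 + a₁`, `a₄a₅ = 1 + a₂`,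
a noncommutative form of Gauss's pentagramma mirificum. For the given tuple each relation is an
identity between rational expressions in the commuting matrices `A`, `B`.
-/

/-- The 2l×2l block matrix `M(𝔞) = [[𝔞, −I], [I, O]]` over a field `𝕂`. -/
noncomputable def Mblk {𝕂 : Type*} [Field 𝕂] {l : ℕ} (a : Matrix (Fin l) (Fin l) 𝕂) :
    Matrix (Fin l ⊕ Fin l) (Fin l ⊕ Fin l) 𝕂 :=
  Matrix.fromBlocks a (-1) 1 0

/-- A left matrix quiddity sequence: a tuple `(𝔞₁,…,𝔞ₙ)` of l×l matrices with
`M(𝔞ₙ)·M(𝔞ₙ₋₁)···M(𝔞₁) = −Id`. -/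
def IsLMQS {𝕂 : Type*} [Field 𝕂] {l : ℕ} (A : List (Matrix (Fin l) (Fin l) 𝕂)) : Prop :=
  (A.reverse.map Mblk).prod = -1

namespace Matrix

variable {n α : Type*} [Fintype n] [DecidableEq n] [CommRing α] {A B : Matrix n n α}

theorem _root_.Commute.nonsing_inv_left (h : Commute A B) : Commute A⁻¹ B := by
  rcases nonsing_inv_cancel_or_zero A with ⟨hl, hr⟩ | h0
  · calc A⁻¹ * B = A⁻¹ * (B * A) * A⁻¹ := by rw [mul_assoc, mul_assoc, hr, mul_one]
      _ = B * A⁻¹ := by rw [← h.eq, ← mul_assoc, hl, one_mul]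
  · rw [h0]
    exact Commute.zero_left B

theorem _root_.Commute.nonsing_inv_right (h : Commute A B) : Commute A B⁻¹ :=
  h.symm.nonsing_inv_left.symm

theorem _root_.Commute.nonsing_inv_nonsing_inv (h : Commute A B) : Commute A⁻¹ B⁻¹ :=
  h.nonsing_inv_left.nonsing_inv_right

theorem nonsing_inv_mul_one_add_mul (hA : IsUnit A.det) (h : Commute A B) :
    A⁻¹ * (1 + B) * A = 1 + B := by
  rw [mul_add, mul_one, add_mul, nonsing_inv_mul A hA, h.nonsing_inv_left.eq, mul_assoc,
    nonsing_inv_mul A hA, mul_one]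

theorem one_add_mul_nonsing_inv_mul_nonsing_inv_mul (hA : IsUnit A.det) (hB : IsUnit B.det)
    (h : Commute A B) :
    (1 + A) * B⁻¹ * (A⁻¹ * (1 + B)) = 1 + B⁻¹ * (1 + A + B) * A⁻¹ := by
  have hAB : A * B⁻¹ * A⁻¹ = B⁻¹ := by
    rw [h.nonsing_inv_right.eq, mul_nonsing_inv_cancel_right _ _ hA]
  have hBA : B⁻¹ * A⁻¹ * B = A⁻¹ := by
    rw [← h.nonsing_inv_nonsing_inv.eq, nonsing_inv_mul_cancel_right _ _ hB]
  simp only [mul_add, add_mul, mul_one, one_mul, ← mul_assoc, hAB, hBA,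
    mul_nonsing_inv_cancel_right _ _ hA, nonsing_inv_mul _ hB]
  abel

theorem mul_nonsing_inv_one_add_add_mul (hA : IsUnit A.det) (hB : IsUnit B.det)
    (h : Commute A B) :
    B * (B⁻¹ * (1 + A + B) * A⁻¹) = 1 + A⁻¹ * (1 + B) := by
  rw [mul_assoc, mul_nonsing_inv_cancel_left _ _ hB, add_mul, add_mul, one_mul,
    mul_nonsing_inv _ hA, mul_add, mul_one, h.nonsing_inv_left.eq]
  abel

end Matrix

open Matrix

section Quiddity

variable {𝕂 : Type*} [Field 𝕂] {l : ℕ}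

theorem Mblk_mul_Mblk_mul_Mblk (a b c : Matrix (Fin l) (Fin l) 𝕂) :
    Mblk c * Mblk b * Mblk a = fromBlocks (c * b * a - c - a) (1 - c * b) (b * a - 1) (-b) := by
  simp only [Mblk, fromBlocks_multiply]
  congr 1 <;> noncomm_ring

theorem Mblk_mul_Mblk_mul_fromBlocks (d e : Matrix (Fin l) (Fin l) 𝕂) :
    Mblk e * Mblk d * fromBlocks 1 (-e) d (1 - d * e) = -1 := by
  simp only [Mblk, fromBlocks_multiply, ← fromBlocks_one, fromBlocks_neg]
  congr 1 <;> noncomm_ring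

theorem isLMQS_of_mul_eq_one_add {a₁ a₂ a₃ a₄ a₅ : Matrix (Fin l) (Fin l) 𝕂}
    (h₁ : a₂ * a₁ = 1 + a₄) (h₂ : a₃ * a₂ = 1 + a₅) (h₃ : a₃ * a₄ = 1 + a₁)
    (h₄ : a₄ * a₅ = 1 + a₂) : IsLMQS [a₁, a₂, a₃, a₄, a₅] := by
  have hprod : IsLMQS [a₁, a₂, a₃, a₄, a₅] ↔
      Mblk a₅ * Mblk a₄ * (Mblk a₃ * Mblk a₂ * Mblk a₁) = -1 := by
    simp [IsLMQS, mul_assoc]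
  rw [hprod, Mblk_mul_Mblk_mul_Mblk, ← Mblk_mul_Mblk_mul_fromBlocks a₄ a₅]
  congr 2
  · rw [mul_assoc, h₁, mul_add, mul_one, h₃]; abel
  · rw [h₂]; abel
  · rw [h₁]; abel
  · rw [h₄]; abel

end Quiddity

/-- For invertible commuting `𝔄, 𝔅`, the tuple
`(𝔄, 𝔄⁻¹(I+𝔅), (I+𝔄)𝔅⁻¹, 𝔅, 𝔅⁻¹(I+𝔄+𝔅)𝔄⁻¹)` is a left matrix quiddity
sequence of length 5 (the quiddity sequence of a two-sided matrix-valued frieze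
pattern of period 5). -/
theorem gauss_lmqs {𝕂 : Type*} [Field 𝕂] {l : ℕ} (A B : Matrix (Fin l) (Fin l) 𝕂)
    (hA : IsUnit A) (hB : IsUnit B) (hcomm : A * B = B * A) :
    IsLMQS [A, A⁻¹ * (1 + B), (1 + A) * B⁻¹, B, B⁻¹ * (1 + A + B) * A⁻¹] := by
  rw [isUnit_iff_isUnit_det] at hA hB
  exact isLMQS_of_mul_eq_one_add (nonsing_inv_mul_one_add_mul hA hcomm)
    (one_add_mul_nonsing_inv_mul_nonsing_inv_mul hA hB hcomm)
    (nonsing_inv_mul_cancel_right _ _ hB) (mul_nonsing_inv_one_add_add_mul hA hB hcomm)
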